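/- arXiv:1109.2481 — 2 statements merged into one kernel-verified Lean document; each statement's English description precedes it below -/
import Mathlib

section
/- Let n ≥ 1, let R : ℝ → Matrix (Fin n) (Fin n) ℝ be continuous, let α ∈ ℝ, and let A, B : ℝ → Matrix (Fin n) (Fin n) ℝ be differentiable solutions of the matrix Riccati equation A'(t) + A(t)² + R(t) = 0 and B'(t) + B(t)² + R(t) = 0 for all t ∈ ℝ, with trace (A t) = −α and trace (B t) = α for all t ∈ ℝ. Then the function t ↦ det (B t − A t) is constant. -/
open Matrix

attribute [local instance] Matrix.normedAddCommGroup Matrix.normedSpace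

/-!
Jacobi's formula gives `(det W)' = tr (W' adj W)`. For `W = B - A` the Riccati equations give
`W' = -(B W + W A)`, and since `W adj W = adj W W = det W • 1` this yields
`(det W)' = -(tr A + tr B) det W`, which vanishes because the traces cancel.
-/

namespace Matrix

variable {ι 𝕜 : Type*} [Fintype ι] [DecidableEq ι]

noncomputable def detRowContinuousMultilinear (𝕜 : Type*) [NontriviallyNormedField 𝕜] :
    ContinuousMultilinearMap 𝕜 (fun _ : ι => ι → 𝕜) 𝕜 where
  toMultilinearMap := (detRowAlternating : (ι → 𝕜) [⋀^ι]→ₗ[𝕜] 𝕜).toMultilinearMap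
  cont := continuous_id.matrix_det

theorem sum_det_updateRow [CommRing 𝕜] (X M : Matrix ι ι 𝕜) :
    ∑ i, (X.updateRow i (M i)).det = (M * adjugate X).trace := by
  simp_rw [← cramer_transpose_apply, cramer_eq_adjugate_mulVec, trace, diag_apply, mul_apply,
    mulVec, dotProduct, ← adjugate_transpose, transpose_apply, mul_comm]

theorem hasDerivAt_det [NontriviallyNormedField 𝕜] {W : 𝕜 → Matrix ι ι 𝕜} {W' : Matrix ι ι 𝕜}
    {t : 𝕜} (h : HasDerivAt W W' t) :
    HasDerivAt (fun s => (W s).det) ((W' * adjugate (W t)).trace) t := by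
  refine ((detRowContinuousMultilinear 𝕜).hasFDerivAt (W t) |>.comp_hasDerivAt t h).congr_deriv ?_
  rw [← sum_det_updateRow]
  exact ContinuousMultilinearMap.linearDeriv_apply _ _ _

theorem trace_mul_add_mul_mul_adjugate [CommRing 𝕜] (A B W : Matrix ι ι 𝕜) :
    ((B * W + W * A) * adjugate W).trace = W.det * (A.trace + B.trace) := by
  rw [add_mul, trace_add, Matrix.mul_assoc, mul_adjugate, Matrix.mul_assoc, trace_mul_comm W,
    Matrix.mul_assoc, adjugate_mul]
  simp only [Matrix.mul_smul, Matrix.mul_one, trace_smul, smul_eq_mul]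
  ring

end Matrix

theorem sub_eq_of_riccati {α : Type*} [Ring α] {a b a' b' r : α} (ha : a' + a ^ 2 + r = 0)
    (hb : b' + b ^ 2 + r = 0) : b' - a' = -(b * (b - a) + (b - a) * a) := by
  have : b' - a' = (b' + b ^ 2 + r) - (a' + a ^ 2 + r) - (b ^ 2 - a ^ 2) := by noncomm_ring
  rw [this, ha, hb]
  noncomm_ring

theorem hasDerivAt_det_sub_of_riccati {ι 𝕜 : Type*} [Fintype ι] [DecidableEq ι]
    [NontriviallyNormedField 𝕜] {R A B : 𝕜 → Matrix ι ι 𝕜} {A' B' : Matrix ι ι 𝕜} {t : 𝕜}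
    (hA : HasDerivAt A A' t) (hB : HasDerivAt B B' t)
    (hAric : A' + A t ^ 2 + R t = 0) (hBric : B' + B t ^ 2 + R t = 0) :
    HasDerivAt (fun s => (B s - A s).det)
      (-((A t).trace + (B t).trace) * (B t - A t).det) t := by
  refine (hasDerivAt_det (hB.sub hA)).congr_deriv ?_
  rw [Pi.sub_apply, sub_eq_of_riccati hAric hBric, Matrix.neg_mul, trace_neg,
    trace_mul_add_mul_mul_adjugate]
  ring

theorem det_riccati_difference_const_general (n : ℕ) (α : ℝ)
    (R A B A' B' : ℝ → Matrix (Fin n) (Fin n) ℝ)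
    (hA : ∀ t : ℝ, HasDerivAt A (A' t) t)
    (hB : ∀ t : ℝ, HasDerivAt B (B' t) t)
    (hAric : ∀ t : ℝ, A' t + (A t) ^ 2 + R t = 0)
    (hBric : ∀ t : ℝ, B' t + (B t) ^ 2 + R t = 0)
    (htrA : ∀ t : ℝ, (A t).trace = -α)
    (htrB : ∀ t : ℝ, (B t).trace = α) :
    ∀ t₁ t₂ : ℝ, (B t₁ - A t₁).det = (B t₂ - A t₂).det := by
  have hderiv (t : ℝ) : HasDerivAt (fun s => (B s - A s).det) 0 t := by
    simpa [htrA t, htrB t] using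
      hasDerivAt_det_sub_of_riccati (hA t) (hB t) (hAric t) (hBric t)
  exact is_const_of_deriv_eq_zero (fun t => (hderiv t).differentiableAt) fun t => (hderiv t).deriv

/-- If `A` and `B` are differentiable solutions of the matrix Riccati equation
`W' + W² + R = 0` with `R` continuous, `trace A ≡ −α` and `trace B ≡ α`, then
`t ↦ det (B t − A t)` is constant. -/
theorem det_riccati_difference_const (n : ℕ) (hn : 1 ≤ n) (α : ℝ)
    (R A B A' B' : ℝ → Matrix (Fin n) (Fin n) ℝ)
    (hR : Continuous R)
    (hA : ∀ t : ℝ, HasDerivAt A (A' t) t)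
    (hB : ∀ t : ℝ, HasDerivAt B (B' t) t)
    (hAric : ∀ t : ℝ, A' t + (A t) ^ 2 + R t = 0)
    (hBric : ∀ t : ℝ, B' t + (B t) ^ 2 + R t = 0)
    (htrA : ∀ t : ℝ, (A t).trace = -α)
    (htrB : ∀ t : ℝ, (B t).trace = α) :
    ∀ t₁ t₂ : ℝ, (B t₁ - A t₁).det = (B t₂ - A t₂).det :=
  det_riccati_difference_const_general n α R A B A' B' hA hB hAric hBric htrA htrB
end

section
/- Let n ≥ 1 and 0 < T₁ < T₂. Let R : ℝ → Matrix (Fin n) (Fin n) ℝ be continuous with R(t) symmetric for every t. Let J : ℝ → Matrix (Fin n) (Fin n) ℝ be twice continuously differentiable with J''(t) + R(t)·J(t) = 0 for all t, J(0) = 0 and J'(0) = 1 (the identity matrix), and assume J(t) is invertible for all t ∈ (0, T₂]. For T ∈ {T₁, T₂} define E_T(t) = J(t) · ∫_t^T J(s)⁻¹·(J(s)⁻¹)ᵀ ds on (0, T]. Then for all t ∈ (0, T₁), E_{T₂}'(t) − E_{T₁}'(t) = J'(t) · ∫_{T₁}^{T₂} J(s)⁻¹·(J(s)⁻¹)ᵀ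 ds, and consequently lim_{t → 0⁺} (E_{T₂}'(t) − E_{T₁}'(t)) = ∫_{T₁}^{T₂} J(s)⁻¹·(J(s)⁻¹)ᵀ ds. -/
/-!
By the product rule and the fundamental theorem of calculus, with `g s = J(s)⁻¹·(J(s)⁻¹)ᵀ`,
`E_T'(t) = J'(t)·∫_t^T g − J(t)·g(t)`. The term `J(t)·g(t)` does not depend on `T`, so it cancels
in `E_{T₂}' − E_{T₁}'`, leaving `J'(t)·(∫_t^{T₂} g − ∫_t^{T₁} g) = J'(t)·∫_{T₁}^{T₂} g`; as `t → 0⁺`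
this tends to `J'(0)·∫_{T₁}^{T₂} g = ∫_{T₁}^{T₂} g`.
-/

open Matrix Set Filter Topology

attribute [local instance] Matrix.normedAddCommGroup Matrix.normedSpace

/- The topology induced by the sup norm is the product topology only up to unfolding, which
instance search does not do; these two instances let integrability and measurability of
matrix-valued functions be stated for the product topology. -/
noncomputable instance Matrix.instENormedAddMonoid {m n α : Type*} [Fintype m] [Fintype n]
    [NormedAddCommGroup α] : ENormedAddMonoid (Matrix m n α) :=
  NormedAddGroup.toENormedAddMonoid

instance Matrix.instPseudoMetrizableSpace {m n α : Type*} [TopologicalSpace α]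
    [TopologicalSpace.PseudoMetrizableSpace α] [Finite m] [Finite n] :
    TopologicalSpace.PseudoMetrizableSpace (Matrix m n α) :=
  inferInstanceAs (TopologicalSpace.PseudoMetrizableSpace (m → n → α))

variable {ι : Type*} [Fintype ι] [DecidableEq ι]

theorem ContinuousAt.matrix_inv_of_isUnit {K X : Type*} [Field K] [TopologicalSpace K]
    [IsTopologicalDivisionRing K] [TopologicalSpace X]
    {A : X → Matrix ι ι K} {x : X} (hA : ContinuousAt A x) (hx : IsUnit (A x)) :
    ContinuousAt (fun y => (A y)⁻¹) x := by
  refine (continuousAt_matrix_inv _ ?_).comp hA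
  rw [Ring.inverse_eq_inv']
  exact continuousAt_inv₀ ((isUnit_iff_isUnit_det _).1 hx).ne_zero

theorem HasDerivAt.matrix_mul {𝕜 : Type*} [NontriviallyNormedField 𝕜] [CompleteSpace 𝕜]
    {A B : 𝕜 → Matrix ι ι 𝕜} {A' B' : Matrix ι ι 𝕜} {t : 𝕜}
    (hA : HasDerivAt A A' t) (hB : HasDerivAt B B' t) :
    HasDerivAt (fun u => A u * B u) (A' * B t + A t * B') t := by
  have := (LinearMap.mul 𝕜 (Matrix ι ι 𝕜)).toContinuousBilinearMap.hasDerivAt_of_bilinear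
    (fun _ => hA) (fun _ => hB)
  rw [add_comm] at this
  exact this

theorem hasDerivAt_mul_integral_left_of_continuousOn {J g : ℝ → Matrix ι ι ℝ}
    {J' : Matrix ι ι ℝ} {a b t T : ℝ} (hJ : HasDerivAt J J' t) (hg : ContinuousOn g (Ioc a b))
    (ht : t ∈ Ioo a b) (hT : T ∈ Ioc a b) :
    HasDerivAt (fun u => J u * ∫ s in u..T, g s) (J' * (∫ s in t..T, g s) - J t * g t) t := by
  have hg_int : IntervalIntegrable g MeasureTheory.volume t T :=
    (hg.mono (ordConnected_Ioc.uIcc_subset (Ioo_subset_Ioc_self ht) hT)).intervalIntegrable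
  have hg_meas : StronglyMeasurableAtFilter g (𝓝 t) :=
    (hg.mono Ioo_subset_Ioc_self).stronglyMeasurableAtFilter isOpen_Ioo t ht
  have hg_cont : ContinuousAt g t := hg.continuousAt (Ioc_mem_nhds ht.1 ht.2)
  simpa only [mul_neg, ← sub_eq_add_neg] using
    hJ.matrix_mul (intervalIntegral.integral_hasDerivAt_left hg_int hg_meas hg_cont)

theorem jacobi_tensor_deriv_difference_general (n : ℕ) (T₁ T₂ : ℝ)
    (hT₁ : 0 < T₁) (hT₁₂ : T₁ < T₂)
    (J J' J'' : ℝ → Matrix (Fin n) (Fin n) ℝ)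
    (hJd : ∀ t : ℝ, HasDerivAt J (J' t) t)
    (hJd2 : ∀ t : ℝ, HasDerivAt J' (J'' t) t)
    (hJ'0 : J' 0 = 1)
    (hinv : ∀ t ∈ Set.Ioc 0 T₂, IsUnit (J t)) :
    ∃ D₁ D₂ : ℝ → Matrix (Fin n) (Fin n) ℝ,
      (∀ t ∈ Set.Ioo 0 T₁,
        HasDerivAt (fun u => J u * ∫ s in u..T₁, (J s)⁻¹ * ((J s)⁻¹)ᵀ) (D₁ t) t) ∧
      (∀ t ∈ Set.Ioo 0 T₁,
        HasDerivAt (fun u => J u * ∫ s in u..T₂, (J s)⁻¹ * ((J s)⁻¹)ᵀ) (D₂ t) t) ∧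
      (∀ t ∈ Set.Ioo 0 T₁,
        D₂ t - D₁ t = J' t * ∫ s in T₁..T₂, (J s)⁻¹ * ((J s)⁻¹)ᵀ) ∧
      Tendsto (fun t => D₂ t - D₁ t) (𝓝[>] (0 : ℝ))
        (𝓝 (∫ s in T₁..T₂, (J s)⁻¹ * ((J s)⁻¹)ᵀ)) := by
  set g : ℝ → Matrix (Fin n) (Fin n) ℝ := fun s => (J s)⁻¹ * ((J s)⁻¹)ᵀ
  set D : ℝ → ℝ → Matrix (Fin n) (Fin n) ℝ := fun T t => J' t * (∫ s in t..T, g s) - J t * g t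
  have hJ : Continuous J := continuous_iff_continuousAt.2 fun t => (hJd t).continuousAt
  have hg : ContinuousOn g (Ioc 0 T₂) := fun s hs =>
    have hJinv := hJ.continuousAt.matrix_inv_of_isUnit (hinv s hs)
    (hJinv.mul (continuous_id.matrix_transpose.continuousAt.comp hJinv)).continuousWithinAt
  have hT₁_mem : T₁ ∈ Ioc 0 T₂ := ⟨hT₁, hT₁₂.le⟩
  have hT₂_mem : T₂ ∈ Ioc 0 T₂ := ⟨hT₁.trans hT₁₂, le_rfl⟩
  have hD : ∀ T ∈ Ioc 0 T₂, ∀ t ∈ Ioo 0 T₁,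
      HasDerivAt (fun u => J u * ∫ s in u..T, g s) (D T t) t := fun T hT t ht =>
    hasDerivAt_mul_integral_left_of_continuousOn (hJd t) hg ⟨ht.1, ht.2.trans hT₁₂⟩ hT
  have hdiff : ∀ t ∈ Ioo 0 T₁, D T₂ t - D T₁ t = J' t * ∫ s in T₁..T₂, g s := by
    intro t ht
    have hg_int : ∀ T ∈ Ioc 0 T₂, IntervalIntegrable g MeasureTheory.volume t T := fun T hT =>
      (hg.mono (ordConnected_Ioc.uIcc_subset ⟨ht.1, (ht.2.trans hT₁₂).le⟩ hT)).intervalIntegrable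
    rw [← intervalIntegral.integral_interval_sub_left (hg_int T₂ hT₂_mem) (hg_int T₁ hT₁_mem),
      mul_sub]
    exact sub_sub_sub_cancel_right _ _ _
  refine ⟨D T₁, D T₂, hD T₁ hT₁_mem, hD T₂ hT₂_mem, hdiff, ?_⟩
  have hJ'_cont : ContinuousAt J' 0 := (hJd2 0).continuousAt
  have hlim : Tendsto (fun t => J' t * ∫ s in T₁..T₂, g s) (𝓝[>] 0) (𝓝 (∫ s in T₁..T₂, g s)) := by
    simpa only [hJ'0, one_mul] using
      (hJ'_cont.tendsto.mul_const _).mono_left nhdsWithin_le_nhds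
  exact hlim.congr' (eventuallyEq_of_mem (Ioo_mem_nhdsGT hT₁) fun t ht => (hdiff t ht).symm)

/-- For the tensors `E_T(t) = J(t)·∫_t^T J(s)⁻¹·(J(s)⁻¹)ᵀ ds` built from the matrix
Jacobi tensor `J`, one has `E_{T₂}'(t) − E_{T₁}'(t) = J'(t)·∫_{T₁}^{T₂} J(s)⁻¹·(J(s)⁻¹)ᵀ ds`
on `(0, T₁)`, and hence `E_{T₂}'(t) − E_{T₁}'(t) → ∫_{T₁}^{T₂} J(s)⁻¹·(J(s)⁻¹)ᵀ ds`
as `t → 0⁺`. -/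
theorem jacobi_tensor_deriv_difference (n : ℕ) (hn : 1 ≤ n) (T₁ T₂ : ℝ)
    (hT₁ : 0 < T₁) (hT₁₂ : T₁ < T₂)
    (R J J' J'' : ℝ → Matrix (Fin n) (Fin n) ℝ)
    (hRcont : Continuous R) (hRsymm : ∀ t : ℝ, (R t).IsSymm)
    (hJd : ∀ t : ℝ, HasDerivAt J (J' t) t)
    (hJd2 : ∀ t : ℝ, HasDerivAt J' (J'' t) t)
    (hJ''cont : Continuous J'')
    (hJac : ∀ t : ℝ, J'' t + R t * J t = 0)
    (hJ0 : J 0 = 0) (hJ'0 : J' 0 = 1)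
    (hinv : ∀ t ∈ Set.Ioc 0 T₂, IsUnit (J t)) :
    ∃ D₁ D₂ : ℝ → Matrix (Fin n) (Fin n) ℝ,
      (∀ t ∈ Set.Ioo 0 T₁,
        HasDerivAt (fun u => J u * ∫ s in u..T₁, (J s)⁻¹ * ((J s)⁻¹)ᵀ) (D₁ t) t) ∧
      (∀ t ∈ Set.Ioo 0 T₁,
        HasDerivAt (fun u => J u * ∫ s in u..T₂, (J s)⁻¹ * ((J s)⁻¹)ᵀ) (D₂ t) t) ∧
      (∀ t ∈ Set.Ioo 0 T₁,
        D₂ t - D₁ t = J' t * ∫ s in T₁..T₂, (J s)⁻¹ * ((J s)⁻¹)ᵀ) ∧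
      Tendsto (fun t => D₂ t - D₁ t) (𝓝[>] (0 : ℝ))
        (𝓝 (∫ s in T₁..T₂, (J s)⁻¹ * ((J s)⁻¹)ᵀ)) :=
  jacobi_tensor_deriv_difference_general n T₁ T₂ hT₁ hT₁₂ J J' J'' hJd hJd2 hJ'0 hinv
end
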